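/- Let a, b, k, Λ, λ be real numbers with a > 0 and b + k² + Λ = 0. Let m₁, m₂, m₃ be real numbers with m_j ≠ k and (m_j² + b + λ²)·(m_j − k) + a² = 0 for j = 1, 2, 3, and set n_j := m_j² − k² − Λ + (2/3)·λ². Define N(x,t) = k·x − Λ·t, P(x,t) = diag(1, exp(−i·N(x,t)), 1), E(x,t) = diag(exp(i·(m₁·x + n₁·t)), exp(i·(m₂·x + n₂·t)), exp(i·(m₃·x + n₃·t))), and let R be the 3×3 matrix whose j-th column is (−1, a/(k − m_j), λ − i·m_j)ᵀ. Then Φ(x,t) := P(x,t)·R·E(x,t) satisfies ∂ₓΦ = U·Φ and ∂ₜΦ = V·Φ, where U and V are the Lax matrices of the Yajima–Oikawa system built from λ and the plane wave pair z(x,t) = a·exp(−i·N(x,t)), m(x,t) = b. -/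

import Mathlib

open Complex Matrix

noncomputable section

/-- Partial derivative in the first (spatial) variable. -/
def pdx (f : ℝ × ℝ → ℂ) (p : ℝ × ℝ) : ℂ := deriv (fun s => f (s, p.2)) p.1

/-- The spatial Lax matrix of the Yajima–Oikawa system. -/
def LaxU (lam : ℂ) (z : ℝ × ℝ → ℂ) (m : ℝ × ℝ → ℝ) (p : ℝ × ℝ) :
    Matrix (Fin 3) (Fin 3) ℂ :=
  !![lam, 0, 1;
     Complex.I * z p, 0, 0;
     (m p : ℂ), (starRingEnd ℂ) (z p), -lam]

/-- The temporal Lax matrix of the Yajima–Oikawa system. -/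
def LaxV (lam : ℂ) (z : ℝ × ℝ → ℂ) (p : ℝ × ℝ) :
    Matrix (Fin 3) (Fin 3) ℂ :=
  !![-(1/3) * Complex.I * lam ^ 2, -Complex.I * (starRingEnd ℂ) (z p), 0;
     lam * z p - pdx z p, (2/3) * Complex.I * lam ^ 2, z p;
     ((‖z p‖) ^ 2 : ℝ),
       Complex.I * (lam * (starRingEnd ℂ) (z p) - pdx (fun q => (starRingEnd ℂ) (z q)) p),
       -(1/3) * Complex.I * lam ^ 2]

/-!
Gauge away the phase of the plane wave: with `P = diag (1, e^{-iN}, 1)`, `P' = κ P` for a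
constant diagonal `κ`, and `U P = P U₀`, `V P = P V₀` for constant matrices `U₀`, `V₀`.
Hence `P R E` solves the Lax pair as soon as `R E` solves the constant-coefficient system
with matrices `U₀ - κₓ`, `V₀ - κₜ`, i.e. as soon as the columns of `R` are common eigenvectors
of these two matrices with eigenvalues `i mⱼ` and `i nⱼ`. The cubic satisfied by `mⱼ` is the
characteristic equation of `U₀ - κₓ`, and `nⱼ` is the corresponding eigenvalue of `V₀ - κₜ`.
-/

open ComplexConjugate

theorem hasDerivAt_diagonal_mul_mul_diagonal_apply {n : Type*} [Fintype n] [DecidableEq n]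
    {p e : ℝ → n → ℂ} {κ μ : n → ℂ}
    {A B R : Matrix n n ℂ} {s : ℝ}
    (hp : ∀ i, HasDerivAt (fun s => p s i) (κ i * p s i) s)
    (he : ∀ j, HasDerivAt (fun s => e s j) (μ j * e s j) s)
    (hA : A * diagonal (p s) = diagonal (p s) * B)
    (hR : (B - diagonal κ) * R = R * diagonal μ) (i j : n) :
    HasDerivAt (fun s => (diagonal (p s) * R * diagonal (e s)) i j)
      ((A * (diagonal (p s) * R * diagonal (e s))) i j) s := by
  have hBR : B * R = R * diagonal μ + diagonal κ * R := by rw [← hR, sub_mul, sub_add_cancel]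
  have hAPRE : A * (diagonal (p s) * R * diagonal (e s))
      = diagonal (p s) * (B * R) * diagonal (e s) := by
    rw [← Matrix.mul_assoc, ← Matrix.mul_assoc, hA, Matrix.mul_assoc _ B]
  simp only [hAPRE, hBR, diagonal_mul, mul_diagonal, Matrix.add_apply]
  exact (((hp i).mul_const (R i j)).mul (he j)).congr_deriv (by ring)

theorem hasDerivAt_cexp_of_hasDerivAt {f : ℝ → ℂ} {f' : ℂ} {x : ℝ} (hf : HasDerivAt f f' x) :
    HasDerivAt (fun s => exp (f s)) (f' * exp (f x)) x :=
  hf.cexp.congr_deriv (mul_comm _ _)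

theorem hasDerivAt_vec_one_cexp_one {f : ℝ → ℂ} {f' : ℂ} {x : ℝ} (hf : HasDerivAt f f' x) (i : Fin 3) :
    HasDerivAt (fun s => ![1, exp (f s), 1] i) (![0, f', 0] i * ![1, exp (f x), 1] i) x := by
  fin_cases i
  · simpa using hasDerivAt_const x (1 : ℂ)
  · simpa using hasDerivAt_cexp_of_hasDerivAt hf
  · simpa using hasDerivAt_const x (1 : ℂ)

theorem pdx_conj {f : ℝ × ℝ → ℂ} {f' : ℂ} {q : ℝ × ℝ}
    (hf : HasDerivAt (fun s => f (s, q.2)) f' q.1) :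
    pdx (fun q => conj (f q)) q = conj f' :=
  hf.star.deriv

theorem conj_mul_self_of_norm_eq_one {w : ℂ} (hw : ‖w‖ = 1) : conj w * w = 1 := by
  rw [conj_mul', hw]; norm_num

/- `U₀ = P⁻¹ U P` and `V₀ = P⁻¹ V P` for the plane wave `z = a w`, `m = b` and
`P = diag (1, w, 1)`, where `|w| = 1` and `∂ₓ z = -i k z`. -/
def gaugedLaxU (lam a b : ℝ) : Matrix (Fin 3) (Fin 3) ℂ :=
  !![lam, 0, 1; I * a, 0, 0; b, a, -lam]

def gaugedLaxV (lam a k : ℝ) : Matrix (Fin 3) (Fin 3) ℂ :=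
  !![-(1/3) * I * lam ^ 2, -I * a, 0;
     a * (lam + I * k), (2/3) * I * lam ^ 2, a;
     (a : ℂ) ^ 2, a * (k + I * lam), -(1/3) * I * lam ^ 2]

theorem laxU_mul_diagonal {lam a b : ℝ} {w : ℂ} {z : ℝ × ℝ → ℂ} {m : ℝ × ℝ → ℝ} {q : ℝ × ℝ}
    (hw : ‖w‖ = 1) (hz : z q = a * w) (hm : m q = b) :
    LaxU lam z m q * diagonal ![1, w, 1] = diagonal ![1, w, 1] * gaugedLaxU lam a b := by
  have hww := conj_mul_self_of_norm_eq_one hw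
  ext i j
  fin_cases i <;> fin_cases j <;>
    simp [LaxU, gaugedLaxU, hz, hm, Matrix.mul_apply, Fin.sum_univ_three] <;>
    grind [I_mul_I]

theorem laxV_mul_diagonal {lam a k : ℝ} {w : ℂ} {z : ℝ × ℝ → ℂ} {q : ℝ × ℝ}
    (hw : ‖w‖ = 1) (hz : z q = a * w) (hzx : pdx z q = -I * k * z q)
    (hzx' : pdx (fun q => conj (z q)) q = I * k * conj (z q)) :
    LaxV lam z q * diagonal ![1, w, 1] = diagonal ![1, w, 1] * gaugedLaxV lam a k := by
  have hww := conj_mul_self_of_norm_eq_one hw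
  ext i j
  fin_cases i <;> fin_cases j <;>
    simp [LaxV, gaugedLaxV, hzx, hzx', hz, hw, Matrix.mul_apply, Fin.sum_univ_three] <;>
    grind [I_mul_I]

def planeWaveEigenvectors (a k lam : ℝ) (ms : Fin 3 → ℝ) : Matrix (Fin 3) (Fin 3) ℂ :=
  Matrix.of fun i j =>
    ![(-1 : ℂ), (a : ℂ) / ((k : ℂ) - (ms j : ℂ)), (lam : ℂ) - Complex.I * (ms j : ℂ)] i

theorem ofReal_mul_div_sub_eq {a b k lam m : ℝ} (hm : m ≠ k)
    (hroot : (m ^ 2 + b + lam ^ 2) * (m - k) + a ^ 2 = 0) :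
    (a : ℂ) * (a / (k - m)) = m ^ 2 + b + lam ^ 2 := by
  have hkm : (k : ℂ) - m ≠ 0 := sub_ne_zero.mpr (mod_cast hm.symm)
  rw [mul_div_assoc', div_eq_iff hkm]
  linear_combination (mod_cast hroot : ((m ^ 2 + b + lam ^ 2) * (m - k) + a ^ 2 : ℂ) = 0)

theorem gaugedLaxU_sub_mul_planeWaveEigenvectors {a b k lam : ℝ} {ms : Fin 3 → ℝ}
    (hms : ∀ j, ms j ≠ k) (hroot : ∀ j, ((ms j) ^ 2 + b + lam ^ 2) * (ms j - k) + a ^ 2 = 0) :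
    (gaugedLaxU lam a b - diagonal ![0, -I * k, 0]) * planeWaveEigenvectors a k lam ms
      = planeWaveEigenvectors a k lam ms * diagonal fun j => I * ms j := by
  ext i j
  have hkm : (k : ℂ) - ms j ≠ 0 := sub_ne_zero.mpr (mod_cast (hms j).symm)
  have hq : (a : ℂ) / (k - ms j) * (k - ms j) = a := div_mul_cancel₀ _ hkm
  have haq := ofReal_mul_div_sub_eq (hms j) (hroot j)
  rw [mul_diagonal]
  fin_cases i <;>
    simp [gaugedLaxU, planeWaveEigenvectors, Matrix.mul_apply, Fin.sum_univ_three] <;>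
    grind [I_mul_I]

theorem gaugedLaxV_sub_mul_planeWaveEigenvectors {a b k Λ lam : ℝ} {ms : Fin 3 → ℝ}
    (hdisp : b + k ^ 2 + Λ = 0) (hms : ∀ j, ms j ≠ k)
    (hroot : ∀ j, ((ms j) ^ 2 + b + lam ^ 2) * (ms j - k) + a ^ 2 = 0) {ns : Fin 3 → ℝ}
    (hns : ∀ j, ns j = (ms j) ^ 2 - k ^ 2 - Λ + (2/3) * lam ^ 2) :
    (gaugedLaxV lam a k - diagonal ![0, I * Λ, 0]) * planeWaveEigenvectors a k lam ms
      = planeWaveEigenvectors a k lam ms * diagonal fun j => I * ns j := by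
  ext i j
  have hkm : (k : ℂ) - ms j ≠ 0 := sub_ne_zero.mpr (mod_cast (hms j).symm)
  have hq : (a : ℂ) / (k - ms j) * (k - ms j) = a := div_mul_cancel₀ _ hkm
  have haq := ofReal_mul_div_sub_eq (hms j) (hroot j)
  have hdispC : (b : ℂ) + k ^ 2 + Λ = 0 := mod_cast hdisp
  rw [mul_diagonal]
  fin_cases i <;>
    simp [gaugedLaxV, planeWaveEigenvectors, hns, Matrix.mul_apply, Fin.sum_univ_three] <;>
    grind [I_mul_I]

theorem fundamental_matrix_solution_general (a b k Λ lam : ℝ)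
    (hdisp : b + k ^ 2 + Λ = 0)
    (ms : Fin 3 → ℝ) (hms : ∀ j, ms j ≠ k)
    (hroot : ∀ j, ((ms j) ^ 2 + b + lam ^ 2) * (ms j - k) + a ^ 2 = 0)
    (ns : Fin 3 → ℝ) (hns : ns = fun j => (ms j) ^ 2 - k ^ 2 - Λ + (2/3) * lam ^ 2)
    (N : ℝ × ℝ → ℝ) (hN : N = fun p => k * p.1 - Λ * p.2)
    (z : ℝ × ℝ → ℂ) (hz : z = fun p => (a : ℂ) * Complex.exp (-Complex.I * (N p : ℂ)))
    (m : ℝ × ℝ → ℝ) (hm : m = fun _ => b)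
    (P : ℝ × ℝ → Matrix (Fin 3) (Fin 3) ℂ)
    (hP : P = fun p => Matrix.diagonal ![1, Complex.exp (-Complex.I * (N p : ℂ)), 1])
    (E : ℝ × ℝ → Matrix (Fin 3) (Fin 3) ℂ)
    (hE : E = fun p => Matrix.diagonal fun j =>
      Complex.exp (Complex.I * ((ms j : ℂ) * p.1 + (ns j : ℂ) * p.2)))
    (R : Matrix (Fin 3) (Fin 3) ℂ)
    (hR : R = Matrix.of fun i j =>
      ![(-1 : ℂ), (a : ℂ) / ((k : ℂ) - (ms j : ℂ)), (lam : ℂ) - Complex.I * (ms j : ℂ)] i)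
    (Φ : ℝ × ℝ → Matrix (Fin 3) (Fin 3) ℂ)
    (hΦ : Φ = fun p => P p * R * E p) :
    ∀ p : ℝ × ℝ, ∀ i j : Fin 3,
      deriv (fun s => Φ (s, p.2) i j) p.1 = (LaxU lam z m p * Φ p) i j ∧
      deriv (fun s => Φ (p.1, s) i j) p.2 = (LaxV lam z p * Φ p) i j := by
  subst hΦ hP hE hR hz hm hN
  rintro ⟨x, t⟩ i j
  have hw : ‖exp (-I * ((k * x - Λ * t : ℝ) : ℂ))‖ = 1 := by
    rw [norm_exp]; simp
  have hNx : HasDerivAt (fun s : ℝ => -I * ((k * s - Λ * t : ℝ) : ℂ)) (-I * k) x := by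
    simpa using ((((hasDerivAt_id x).const_mul k).sub_const (Λ * t)).ofReal_comp).const_mul (-I)
  have hNt : HasDerivAt (fun s : ℝ => -I * ((k * x - Λ * s : ℝ) : ℂ)) (I * Λ) t := by
    simpa using ((((hasDerivAt_id t).const_mul Λ).const_sub (k * x)).ofReal_comp).const_mul (-I)
  have hEx (j : Fin 3) : HasDerivAt (fun s : ℝ => exp (I * ((ms j : ℂ) * s + (ns j : ℂ) * t)))
      (I * ms j * exp (I * ((ms j : ℂ) * x + (ns j : ℂ) * t))) x := by
    refine hasDerivAt_cexp_of_hasDerivAt ?_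
    simpa using ((((hasDerivAt_id x).ofReal_comp).const_mul (ms j : ℂ)).add_const
      ((ns j : ℂ) * t)).const_mul I
  have hEt (j : Fin 3) : HasDerivAt (fun s : ℝ => exp (I * ((ms j : ℂ) * x + (ns j : ℂ) * s)))
      (I * ns j * exp (I * ((ms j : ℂ) * x + (ns j : ℂ) * t))) t := by
    refine hasDerivAt_cexp_of_hasDerivAt ?_
    simpa using ((((hasDerivAt_id t).ofReal_comp).const_mul (ns j : ℂ)).const_add
      ((ms j : ℂ) * x)).const_mul I
  have hzx := (hasDerivAt_cexp_of_hasDerivAt hNx).const_mul (a : ℂ)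
  constructor
  · exact (hasDerivAt_diagonal_mul_mul_diagonal_apply (hasDerivAt_vec_one_cexp_one hNx) hEx
      (laxU_mul_diagonal hw rfl rfl) (gaugedLaxU_sub_mul_planeWaveEigenvectors hms hroot) i j).deriv
  · refine (hasDerivAt_diagonal_mul_mul_diagonal_apply (hasDerivAt_vec_one_cexp_one hNt) hEt
      (laxV_mul_diagonal hw rfl ?_ ?_)
      (gaugedLaxV_sub_mul_planeWaveEigenvectors hdisp hms hroot (congrFun hns)) i j).deriv
    · exact hzx.deriv.trans (by ring)
    · rw [pdx_conj hzx]
      simp only [map_mul, map_neg, conj_I, conj_ofReal]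
      ring

/-- The matrix `Φ = P·R·E` is a fundamental matrix solution of the Yajima–Oikawa
Lax pair at the plane wave solution. -/
theorem fundamental_matrix_solution (a b k Λ lam : ℝ) (ha : 0 < a)
    (hdisp : b + k ^ 2 + Λ = 0)
    (ms : Fin 3 → ℝ) (hms : ∀ j, ms j ≠ k)
    (hroot : ∀ j, ((ms j) ^ 2 + b + lam ^ 2) * (ms j - k) + a ^ 2 = 0)
    (ns : Fin 3 → ℝ) (hns : ns = fun j => (ms j) ^ 2 - k ^ 2 - Λ + (2/3) * lam ^ 2)
    (N : ℝ × ℝ → ℝ) (hN : N = fun p => k * p.1 - Λ * p.2)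
    (z : ℝ × ℝ → ℂ) (hz : z = fun p => (a : ℂ) * Complex.exp (-Complex.I * (N p : ℂ)))
    (m : ℝ × ℝ → ℝ) (hm : m = fun _ => b)
    (P : ℝ × ℝ → Matrix (Fin 3) (Fin 3) ℂ)
    (hP : P = fun p => Matrix.diagonal ![1, Complex.exp (-Complex.I * (N p : ℂ)), 1])
    (E : ℝ × ℝ → Matrix (Fin 3) (Fin 3) ℂ)
    (hE : E = fun p => Matrix.diagonal fun j =>
      Complex.exp (Complex.I * ((ms j : ℂ) * p.1 + (ns j : ℂ) * p.2)))
    (R : Matrix (Fin 3) (Fin 3) ℂ)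
    (hR : R = Matrix.of fun i j =>
      ![(-1 : ℂ), (a : ℂ) / ((k : ℂ) - (ms j : ℂ)), (lam : ℂ) - Complex.I * (ms j : ℂ)] i)
    (Φ : ℝ × ℝ → Matrix (Fin 3) (Fin 3) ℂ)
    (hΦ : Φ = fun p => P p * R * E p) :
    ∀ p : ℝ × ℝ, ∀ i j : Fin 3,
      deriv (fun s => Φ (s, p.2) i j) p.1 = (LaxU lam z m p * Φ p) i j ∧
      deriv (fun s => Φ (p.1, s) i j) p.2 = (LaxV lam z p * Φ p) i j :=
  fundamental_matrix_solution_general a b k Λ lam hdisp ms hms hroot ns hns N hN z hz m hm P hP E hE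
    R hR Φ hΦ
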